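/- Let K be a field, r, s ∈ K* with r not a root of unity, and define τ, ε as follows: τ = min{ i>0 : sⁱ = rʲ for some j ∈ ℤ } with r^ε = s^τ if such i exists, else τ = ε = 0. Consider the polynomial ring D = K[h,k] with automorphism σ(h)=rh, σ(k)=sk. The σ-invariant subalgebra { p ∈ D : σ(p) = p } equals K if τ = 0 or ε > 0, and equals the polynomial algebra K[h^{−ε}·k^{τ}] if τ > 0 and ε ≤ 0. -/

import Mathlib

/-!
The scaling `h ↦ r h`, `k ↦ s k` multiplies the monomial `hᵃ kᵇ` by `rᵃ sᵇ`, so a polynomial is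
invariant exactly when every monomial in its support has `rᵃ sᵇ = 1`. Dividing `b` by `τ` with
remainder, minimality of `τ` kills the remainder, and since `r` has infinite order the relations
`rᵃ sᵇ = 1` with `a, b ≥ 0` are exactly the nonnegative multiples of `(-ε, τ)`. These are only
`(0, 0)` when `τ = 0` or `ε > 0`, and otherwise the exponents of the powers of `h^{-ε} k^τ`.
-/

open MvPolynomial

namespace MvPolynomial

variable {σ R : Type*}

theorem bind₁_C_mul_X_monomial [CommSemiring R] (c : σ → R) (m : σ →₀ ℕ) (a : R) :
    bind₁ (fun i => C (c i) * X i) (monomial m a) =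
      monomial m ((m.prod fun i k => c i ^ k) * a) := by
  simp_rw [bind₁, aeval_monomial, algebraMap_eq, mul_pow, ← C_pow]
  rw [Finsupp.prod_mul, ← map_finsuppProd, monomial_eq, C_mul]
  ring

theorem coeff_bind₁_C_mul_X [CommSemiring R] (c : σ → R) (p : MvPolynomial σ R)
    (m : σ →₀ ℕ) :
    coeff m (bind₁ (fun i => C (c i) * X i) p) = (m.prod fun i k => c i ^ k) * coeff m p := by
  induction p using induction_on' with
  | monomial n a =>
    classical
    rw [bind₁_C_mul_X_monomial, coeff_monomial, coeff_monomial]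
    split_ifs with h
    · rw [h]
    · rw [mul_zero]
  | add p q hp hq => rw [map_add, coeff_add, coeff_add, hp, hq, mul_add]

theorem bind₁_C_mul_X_eq_self_iff [CommRing R] [IsDomain R] (c : σ → R)
    (p : MvPolynomial σ R) :
    bind₁ (fun i => C (c i) * X i) p = p ↔
      ∀ m ∈ p.support, (m.prod fun i k => c i ^ k) = 1 := by
  rw [MvPolynomial.ext_iff]
  simp only [coeff_bind₁_C_mul_X, mul_left_eq_self₀, mem_support_iff]
  exact forall_congr' fun m => or_iff_not_imp_right

theorem mem_adjoin_monomial_of_forall_mem_support [CommSemiring R] {p : MvPolynomial σ R}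
    {e : σ →₀ ℕ} (h : ∀ m ∈ p.support, ∃ q : ℕ, m = q • e) :
    p ∈ Algebra.adjoin R {monomial e (1 : R)} := by
  rw [p.as_sum]
  refine Subalgebra.sum_mem _ fun m hm => ?_
  obtain ⟨q, rfl⟩ := h m hm
  have hmon : monomial (q • e) (coeff (q • e) p) = C (coeff (q • e) p) * monomial e 1 ^ q := by
    rw [monomial_pow, one_pow, C_mul_monomial, mul_one]
  rw [hmon]
  exact Subalgebra.mul_mem _ (Subalgebra.algebraMap_mem _ _)
    (Subalgebra.pow_mem _ (Algebra.subset_adjoin (Set.mem_singleton _)) q)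

theorem mem_bot_of_forall_mem_support_eq_zero [CommSemiring R] {p : MvPolynomial σ R}
    (h : ∀ m ∈ p.support, m = 0) : p ∈ (⊥ : Subalgebra R (MvPolynomial σ R)) := by
  have hdeg : p.totalDegree = 0 := (totalDegree_eq_zero_iff σ p).2 fun m hm i => by simp [h m hm]
  rw [totalDegree_eq_zero_iff_eq_C.1 hdeg, ← algebraMap_eq]
  exact Subalgebra.algebraMap_mem _ _

end MvPolynomial

section

variable {G : Type*} [CommGroup G] {r s : G} {τ : ℕ} {ε : ℤ}

theorem exists_eq_mul_of_pow_mul_pow_eq_one (hr : ∀ i : ℤ, r ^ i = 1 → i = 0) (hτ : 0 < τ)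
    (hmin : ∀ i : ℕ, 0 < i → (∃ j : ℤ, s ^ i = r ^ j) → τ ≤ i) (hε : r ^ ε = s ^ τ)
    {a b : ℕ} (h : r ^ a * s ^ b = 1) :
    ∃ q : ℕ, (a : ℤ) = -(q * ε) ∧ b = q * τ := by
  have hs : s ^ (b : ℤ) = r ^ (-(a : ℤ)) := by
    rw [zpow_natCast, zpow_neg, zpow_natCast]
    exact eq_inv_of_mul_eq_one_right h
  obtain ⟨q, ρ, hρτ, rfl⟩ : ∃ q ρ, ρ < τ ∧ b = q * τ + ρ :=
    ⟨b / τ, b % τ, Nat.mod_lt b hτ, by rw [mul_comm, Nat.div_add_mod]⟩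
  have hsρ : s ^ (ρ : ℤ) = r ^ (-a - q * ε : ℤ) :=
    calc s ^ (ρ : ℤ) = s ^ ((q * τ + ρ : ℕ) : ℤ) * (s ^ (τ : ℤ)) ^ (-(q : ℤ)) := by
          rw [← zpow_mul, ← zpow_add]; push_cast; ring_nf
      _ = r ^ (-a - q * ε : ℤ) := by
          rw [hs, zpow_natCast, ← hε, ← zpow_mul, ← zpow_add]; ring_nf
  obtain rfl : ρ = 0 := by
    by_contra hρ
    exact absurd (hmin ρ (Nat.pos_of_ne_zero hρ) ⟨_, by rwa [← zpow_natCast]⟩) (not_le.2 hρτ)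
  refine ⟨q, ?_, rfl⟩
  have hr1 : r ^ (-a - q * ε : ℤ) = 1 := by simpa using hsρ.symm
  linarith [hr _ hr1]

theorem eq_zero_of_pow_mul_pow_eq_one_of_pos (hr : ∀ i : ℤ, r ^ i = 1 → i = 0) (hτ : 0 < τ)
    (hmin : ∀ i : ℕ, 0 < i → (∃ j : ℤ, s ^ i = r ^ j) → τ ≤ i) (hε : r ^ ε = s ^ τ)
    (hε0 : 0 < ε) {a b : ℕ} (h : r ^ a * s ^ b = 1) : a = 0 ∧ b = 0 := by
  obtain ⟨q, ha, rfl⟩ := exists_eq_mul_of_pow_mul_pow_eq_one hr hτ hmin hε h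
  obtain rfl : q = 0 := by
    by_contra hq
    have := mul_pos (Int.natCast_pos.2 (Nat.pos_of_ne_zero hq)) hε0
    omega
  omega

theorem exists_eq_mul_of_pow_mul_pow_eq_one_of_nonpos (hr : ∀ i : ℤ, r ^ i = 1 → i = 0)
    (hτ : 0 < τ) (hmin : ∀ i : ℕ, 0 < i → (∃ j : ℤ, s ^ i = r ^ j) → τ ≤ i)
    (hε : r ^ ε = s ^ τ) (hε0 : ε ≤ 0) {a b : ℕ} (h : r ^ a * s ^ b = 1) :
    ∃ q : ℕ, a = q * (-ε).toNat ∧ b = q * τ := by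
  obtain ⟨q, ha, hb⟩ := exists_eq_mul_of_pow_mul_pow_eq_one hr hτ hmin hε h
  refine ⟨q, ?_, hb⟩
  zify
  rw [Int.toNat_of_nonneg (neg_nonneg.2 hε0)]
  linarith

theorem pow_toNat_neg_mul_pow_eq_one (hε : r ^ ε = s ^ τ) (hε0 : ε ≤ 0) :
    r ^ (-ε).toNat * s ^ τ = 1 := by
  rw [← zpow_natCast, Int.toNat_of_nonneg (neg_nonneg.2 hε0), zpow_neg, hε, inv_mul_cancel]

theorem eq_zero_of_pow_mul_pow_eq_one_of_not_exists (hr : ∀ i : ℤ, r ^ i = 1 → i = 0)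
    (hnone : ¬ ∃ i : ℕ, 0 < i ∧ ∃ j : ℤ, s ^ i = r ^ j) {a b : ℕ} (h : r ^ a * s ^ b = 1) :
    a = 0 ∧ b = 0 := by
  obtain rfl : b = 0 := by
    by_contra hb
    refine hnone ⟨b, Nat.pos_of_ne_zero hb, -a, ?_⟩
    rw [zpow_neg, zpow_natCast]
    exact eq_inv_of_mul_eq_one_right h
  rw [pow_zero, mul_one, ← zpow_natCast] at h
  exact ⟨by exact_mod_cast hr _ h, rfl⟩

end

theorem AlgHom.setOf_apply_eq_self_eq {R A : Type*} [CommSemiring R] [Semiring A] [Algebra R A]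
    {f : A →ₐ[R] A} {S : Subalgebra R A} (hS : S ≤ AlgHom.equalizer f (AlgHom.id R A))
    (h : ∀ p, f p = p → p ∈ S) : {p | f p = p} = (S : Set A) :=
  Set.Subset.antisymm h fun _ hp => hS hp

namespace MvPolynomial

variable {K : Type*} [Field K] (r s : Kˣ)

theorem bind₁_C_mul_X_two_eq_self_iff (p : MvPolynomial (Fin 2) K) :
    bind₁ ![C (r : K) * X 0, C (s : K) * X 1] p = p ↔ ∀ m ∈ p.support, r ^ m 0 * s ^ m 1 = 1 := by
  have hdiag : ![C (r : K) * X 0, C (s : K) * X 1] = fun i => C (![(r : K), s] i) * X i := by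
    funext i; fin_cases i <;> rfl
  rw [hdiag, bind₁_C_mul_X_eq_self_iff]
  refine forall₂_congr fun m _ => ?_
  rw [Finsupp.prod_fintype _ _ fun i => pow_zero _, Fin.prod_univ_two, ← Units.val_eq_one]
  simp

theorem setOf_bind₁_C_mul_X_two_eq_self_eq_bot (h : ∀ a b : ℕ, r ^ a * s ^ b = 1 → a = 0 ∧ b = 0) :
    {p : MvPolynomial (Fin 2) K | bind₁ ![C (r : K) * X 0, C (s : K) * X 1] p = p} =
      ((⊥ : Subalgebra K (MvPolynomial (Fin 2) K)) : Set (MvPolynomial (Fin 2) K)) := by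
  refine AlgHom.setOf_apply_eq_self_eq bot_le fun p hp => mem_bot_of_forall_mem_support_eq_zero
    fun m hm => ?_
  obtain ⟨h0, h1⟩ := h _ _ ((bind₁_C_mul_X_two_eq_self_iff r s p).1 hp m hm)
  ext i
  fin_cases i <;> assumption

theorem setOf_bind₁_C_mul_X_two_eq_self_eq_adjoin (a b : ℕ) (hab : r ^ a * s ^ b = 1)
    (h : ∀ a' b' : ℕ, r ^ a' * s ^ b' = 1 → ∃ q : ℕ, a' = q * a ∧ b' = q * b) :
    {p : MvPolynomial (Fin 2) K | bind₁ ![C (r : K) * X 0, C (s : K) * X 1] p = p} =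
      ((Algebra.adjoin K {X 0 ^ a * X 1 ^ b} : Subalgebra K (MvPolynomial (Fin 2) K)) :
        Set (MvPolynomial (Fin 2) K)) := by
  have hgen : (X 0 ^ a * X 1 ^ b : MvPolynomial (Fin 2) K) =
      monomial (Finsupp.single 0 a + Finsupp.single 1 b) 1 := by
    rw [X_pow_eq_monomial, X_pow_eq_monomial, monomial_mul, one_mul]
  rw [hgen]
  refine AlgHom.setOf_apply_eq_self_eq (AlgHom.adjoin_le_equalizer _ _ ?_) fun p hp => ?_
  · rintro _ rfl
    refine (bind₁_C_mul_X_two_eq_self_iff r s _).2 fun m hm => ?_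
    rw [Finset.mem_singleton.1 (support_monomial_subset hm)]
    simpa using hab
  · refine mem_adjoin_monomial_of_forall_mem_support fun m hm => ?_
    obtain ⟨q, h0, h1⟩ := h _ _ ((bind₁_C_mul_X_two_eq_self_iff r s p).1 hp m hm)
    refine ⟨q, ?_⟩
    ext i
    fin_cases i <;> simp [h0, h1]

end MvPolynomial

theorem stmt10 {K : Type*} [Field K] (r s : Kˣ)
    (hr : ∀ i : ℤ, r ^ i = 1 → i = 0)
    (τ : ℕ) (ε : ℤ)
    (hcase :
      ((∃ i : ℕ, 0 < i ∧ ∃ j : ℤ, (s : Kˣ) ^ i = r ^ j) ∧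
        0 < τ ∧ (∀ i : ℕ, 0 < i → (∃ j : ℤ, s ^ i = r ^ j) → τ ≤ i) ∧
        r ^ ε = s ^ τ) ∨
      ((¬ ∃ i : ℕ, 0 < i ∧ ∃ j : ℤ, s ^ i = r ^ j) ∧ τ = 0 ∧ ε = 0)) :
    (τ = 0 ∨ 0 < ε →
      {p : MvPolynomial (Fin 2) K | bind₁ ![C (r : K) * X 0, C (s : K) * X 1] p = p} =
        ((⊥ : Subalgebra K (MvPolynomial (Fin 2) K)) : Set (MvPolynomial (Fin 2) K))) ∧
    (0 < τ → ε ≤ 0 →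
      {p : MvPolynomial (Fin 2) K | bind₁ ![C (r : K) * X 0, C (s : K) * X 1] p = p} =
        ((Algebra.adjoin K {X 0 ^ (-ε).toNat * X 1 ^ τ} :
          Subalgebra K (MvPolynomial (Fin 2) K)) : Set (MvPolynomial (Fin 2) K))) := by
  rcases hcase with ⟨-, hτ, hmin, hε⟩ | ⟨hnone, rfl, -⟩
  · refine ⟨fun hτε => setOf_bind₁_C_mul_X_two_eq_self_eq_bot r s fun a b =>
      eq_zero_of_pow_mul_pow_eq_one_of_pos hr hτ hmin hε (hτε.resolve_left hτ.ne'),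
      fun _ hε0 => setOf_bind₁_C_mul_X_two_eq_self_eq_adjoin r s _ _
        (pow_toNat_neg_mul_pow_eq_one hε hε0) fun a b =>
          exists_eq_mul_of_pow_mul_pow_eq_one_of_nonpos hr hτ hmin hε hε0⟩
  · exact ⟨fun _ => setOf_bind₁_C_mul_X_two_eq_self_eq_bot r s fun a b =>
      eq_zero_of_pow_mul_pow_eq_one_of_not_exists hr hnone, fun hτ => absurd hτ (lt_irrefl 0)⟩
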